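/- For all integers n ≥ 1, the sequence v satisfies v_n + 2·v_{n-1} = (n+1)·F_{n+2}. -/

import Mathlib

/-- The tiling-walking sequence of the (1×n)-board:
`v n = ∑_{k=0}^{⌊n/2⌋} C(n-k, k) * (n-k+1)`. -/
def v (n : ℕ) : ℕ := ∑ k ∈ Finset.range (n / 2 + 1), (n - k).choose k * (n - k + 1)

lemma vext (n : ℕ) : v n = ∑ k ∈ Finset.range (n + 1), (n - k).choose k * (n - k + 1) := by
  rw [v]
  apply Finset.sum_subset
  · intro k hk
    simp only [Finset.mem_range] at *
    omega
  · intro k hk hk2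
    simp only [Finset.mem_range] at *
    have h : n - k < k := by omega
    simp [Nat.choose_eq_zero_of_lt h]

lemma fibsum (n : ℕ) : Nat.fib (n + 1) = ∑ k ∈ Finset.range (n + 1), (n - k).choose k := by
  rw [Nat.fib_succ_eq_sum_choose, Finset.Nat.sum_antidiagonal_eq_sum_range_succ_mk]
  rw [← Finset.sum_range_reflect]
  apply Finset.sum_congr rfl
  intro k hk
  simp only [Finset.mem_range] at hk
  congr 1
  omega

lemma L1 (m k : ℕ) : (m - k) * m.choose k = m * (m - 1).choose k := by
  cases m with
  | zero => cases k <;> simp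
  | succ m' =>
    have h1 := Nat.choose_succ_right_eq (m' + 1) k
    have h2 := Nat.add_one_mul_choose_eq m' k
    simp only [Nat.succ_eq_add_one, Nat.add_sub_cancel]
    calc (m' + 1 - k) * (m' + 1).choose k = (m' + 1).choose k * (m' + 1 - k) := by ring
      _ = (m' + 1).choose (k + 1) * (k + 1) := h1.symm
      _ = (m' + 1) * m'.choose k := h2.symm

lemma L2 (m k : ℕ) : (k + 1) * m.choose (k + 1) = m * (m - 1).choose k := by
  cases m with
  | zero => simp
  | succ m' =>
    have h2 := Nat.add_one_mul_choose_eq m' k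
    simp only [Nat.succ_eq_add_one, Nat.add_sub_cancel] at *
    rw [mul_comm (k + 1), h2.symm, mul_comm]

lemma key (n k : ℕ) (h : 1 ≤ n) :
    (n + 1) * (n + 1 - k).choose k
      = (n - k).choose k * (n - k + 1) + 2 * (k * (n + 1 - k).choose k) := by
  by_cases h2 : 2 * k ≤ n + 1
  · have hk : k ≤ n := by omega
    have e1 : (n + 1 - 2 * k) * (n + 1 - k).choose k = (n + 1 - k) * (n - k).choose k := by
      have h3 := L1 (n + 1 - k) k
      have h4 : n + 1 - k - k = n + 1 - 2 * k := by omega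
      have h5 : n + 1 - k - 1 = n - k := by omega
      rw [h4, h5] at h3
      exact h3
    have hn1 : n + 1 = (n + 1 - 2 * k) + 2 * k := by omega
    calc (n + 1) * (n + 1 - k).choose k
        = ((n + 1 - 2 * k) + 2 * k) * (n + 1 - k).choose k := by rw [← hn1]
      _ = (n + 1 - 2 * k) * (n + 1 - k).choose k + 2 * (k * (n + 1 - k).choose k) := by ring
      _ = (n - k).choose k * (n - k + 1) + 2 * (k * (n + 1 - k).choose k) := by
          rw [e1]
          have : n + 1 - k = n - k + 1 := by omega
          rw [this]
          ring
  · have ha : n + 1 - k < k := by omega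
    have hb : n - k < k := by omega
    simp [Nat.choose_eq_zero_of_lt ha, Nat.choose_eq_zero_of_lt hb]

theorem stmt_6 : ∀ n : ℕ, 1 ≤ n →
    v n + 2 * v (n - 1) = (n + 1) * Nat.fib (n + 2) := by
  rintro n hn
  obtain ⟨m, rfl⟩ : ∃ m, n = m + 1 := ⟨n - 1, by omega⟩
  simp only [Nat.add_sub_cancel]
  rw [vext, vext]
  have hfib : Nat.fib (m + 1 + 2) = ∑ k ∈ Finset.range (m + 3), (m + 2 - k).choose k := by
    have := fibsum (m + 2)
    convert this using 2
  rw [hfib]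
  -- split RHS termwise
  have hsplit : ∑ k ∈ Finset.range (m + 3), (m + 1 + 1) * (m + 2 - k).choose k
      = (∑ k ∈ Finset.range (m + 3), (m + 1 - k).choose k * (m + 1 - k + 1))
        + 2 * ∑ k ∈ Finset.range (m + 3), k * (m + 2 - k).choose k := by
    rw [Finset.mul_sum, ← Finset.sum_add_distrib]
    apply Finset.sum_congr rfl
    intro k _
    have := key (m + 1) k (by omega)
    have e : m + 1 + 1 - k = m + 2 - k := by omega
    rw [e] at this
    exact this
  -- A part: drop last term
  have hA : ∑ k ∈ Finset.range (m + 3), (m + 1 - k).choose k * (m + 1 - k + 1)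
      = ∑ k ∈ Finset.range (m + 1 + 1), (m + 1 - k).choose k * (m + 1 - k + 1) := by
    rw [Finset.sum_range_succ]
    have : m + 1 - (m + 2) = 0 := by omega
    simp [this, Nat.choose_eq_zero_of_lt (by omega : 0 < m + 2)]
  -- B part
  have hB : ∑ k ∈ Finset.range (m + 3), k * (m + 2 - k).choose k
      = ∑ k ∈ Finset.range (m + 1), (m - k).choose k * (m - k + 1) := by
    rw [Finset.sum_range_succ']
    simp only [Nat.zero_mul, Nat.add_zero, Nat.mul_zero, add_zero]
    have step : ∀ j ∈ Finset.range (m + 2),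
        (j + 1) * (m + 2 - (j + 1)).choose (j + 1) = (m + 1 - j) * (m - j).choose j := by
      intro j hj
      have e1 : m + 2 - (j + 1) = m + 1 - j := by omega
      rw [e1, L2 (m + 1 - j) j]
      congr 2
      omega
    rw [Finset.sum_congr rfl step, Finset.sum_range_succ]
    simp only [Nat.sub_self, Nat.zero_mul, add_zero]
    apply Finset.sum_congr rfl
    intro k hk
    simp only [Finset.mem_range] at hk
    have : m + 1 - k = m - k + 1 := by omega
    rw [this]
    ring
  conv_rhs => rw [Finset.mul_sum, hsplit, hA, hB]
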